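/- Relative bound for the perturbed point-vortex system: Fix an integer N ≥ 1. There exists a function C : ℕ × (ℝ₊)⁵ → ℝ₊, nondecreasing with respect to each of its six variables, with the following property. Let a_1,…,a_N ∈ ℝ∖{0}, set a = Σ_{i=1}^N |a_i| and A₀ = min over nonempty proper subsets P ⊊ {1,…,N} of |Σ_{i∈P} a_i|, and assume A₀ ≠ 0. Let G : (0,∞) → ℝ be differentiable with locally Lipschitz derivative on (0,∞) and with derivative Lipschitz on [1,∞), let T > 0, let f : [0,T) × ℝ² → ℝ² be smooth and bounded, and let x_1,…,x_N : [0,T) → ℝ² be differentiable curves with x_i(t) ≠ x_j(t) for i ≠ j satisfying x_i'(t) = Σ_{j≠i} a_j G'(|x_i(t) − x_j(t)|)(x_i(t) − x_j(t))^⊥/|x_i(t) − x_j(t)| + f(t, x_i(t)). Then for all t ∈ [0,T) and all i, j ∈ {1,…,N}: |(x_i(t) − x_j(t)) − (x_i(0) − x_j(0))| ≤ C(N, ‖f‖_{L^∞}, T, a, 1/A₀, sup_{r≥1}|G'(r)|). -/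

import Mathlib

/-!
Induction on the number of vortices, with a bound depending on the cluster size `m`, the size
`F` of the perturbation and the time span `T`. Take a cluster of at most `m + 1` vortices and a
pair `i, j` in it. While `|x_i - x_j|` is large compared with the bound `D` for `m`-clusters,
pigeonholing the distances to `x_i` splits the cluster into two parts, one containing `i` and the
other `j`, at mutual distance more than `2 (D + 1)`. As long as the parts stay `1` apart, each is
a perturbed cluster of at most `m` vortices whose perturbation grows only by `a · sup_{r≥1} |G'|`,
so its members stay within `D` of its center of vorticity; and since the internal interactions
are antisymmetric, that center moves with speed at most `a (F + a sup_{r≥1} |G'|) / A₀`. Hence a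
split can only break after its centers have moved by `1`, which bounds the number of splits on
`[0, T]`, while the times at which `i` and `j` are close contribute at most twice the threshold.
-/

open Filter MeasureTheory

noncomputable section

/-- The plane `ℝ²`. -/
abbrev Plane : Type := EuclideanSpace ℝ (Fin 2)

/-- Counterclockwise rotation by `π/2`: `(v₁, v₂)^⊥ = (−v₂, v₁)`. -/
def perp (v : Plane) : Plane := WithLp.toLp 2 ![-v 1, v 0]

/-- `∇^⊥_y K(|y|) = K'(|y|) y^⊥ / |y|` for a radial kernel profile `K`. -/
def gradPerp (K : ℝ → ℝ) (y : Plane) : Plane := (deriv K ‖y‖ / ‖y‖) • perp y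

/-- A solution of the point-vortex system with intensities `a`, kernel profile `G`,
on the time interval `[0, T)`, with no collapse. -/
def IsVortexSolution (N : ℕ) (a : Fin N → ℝ) (G : ℝ → ℝ) (T : ℝ)
    (x : Fin N → ℝ → Plane) : Prop :=
  (∀ t ∈ Set.Ico (0 : ℝ) T, ∀ i j : Fin N, i ≠ j → x i t ≠ x j t) ∧
  ∀ i : Fin N, ∀ t ∈ Set.Ico (0 : ℝ) T,
    HasDerivWithinAt (x i)
      (∑ j ∈ Finset.univ.erase i, a j • gradPerp G (x i t - x j t))
      (Set.Ico 0 T) t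

/-- The kernel regularity used in the paper: `G ∈ C^{1,1}_loc((0,∞)) ∩ C^{1,1}([1,∞))`,
i.e. `G` is differentiable on `(0,∞)`, with locally Lipschitz derivative there,
and with Lipschitz derivative on `[1,∞)`. -/
def KernelRegular (G : ℝ → ℝ) : Prop :=
  DifferentiableOn ℝ G (Set.Ioi 0) ∧
  (∀ s : Set ℝ, IsCompact s → s ⊆ Set.Ioi 0 → ∃ L : NNReal, LipschitzOnWith L (deriv G) s) ∧
  (∃ L : NNReal, LipschitzOnWith L (deriv G) (Set.Ici 1))

/-- A solution of the perturbed point-vortex system with external field `f`,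
on `[0, T)`, with no collapse. -/
def IsPerturbedVortexSolution (N : ℕ) (a : Fin N → ℝ) (G : ℝ → ℝ) (T : ℝ)
    (f : ℝ → Plane → Plane) (x : Fin N → ℝ → Plane) : Prop :=
  (∀ t ∈ Set.Ico (0 : ℝ) T, ∀ i j : Fin N, i ≠ j → x i t ≠ x j t) ∧
  ∀ i : Fin N, ∀ t ∈ Set.Ico (0 : ℝ) T,
    HasDerivWithinAt (x i)
      ((∑ j ∈ Finset.univ.erase i, a j • gradPerp G (x i t - x j t)) + f t (x i t))
      (Set.Ico 0 T) t

/-- `A₀ = min_{∅ ≠ P ⊊ {1,…,N}} |Σ_{i∈P} a_i|`. -/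
def minProperClusterSum (N : ℕ) (a : Fin N → ℝ) : ℝ :=
  sInf {b : ℝ | ∃ P : Finset (Fin N), P.Nonempty ∧ P ≠ Finset.univ ∧ b = |∑ i ∈ P, a i|}

/-- `A = min_{∅ ≠ P ⊆ {1,…,N}} |Σ_{i∈P} a_i|`. -/
def minClusterSum (N : ℕ) (a : Fin N → ℝ) : ℝ :=
  sInf {b : ℝ | ∃ P : Finset (Fin N), P.Nonempty ∧ b = |∑ i ∈ P, a i|}

/-- The function `C : ℕ × (ℝ₊)⁵ → ℝ₊` is nondecreasing in each of its six variables
(on nonnegative arguments) and nonnegative. -/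
def MonotoneNonnegConstant (C : ℕ → ℝ → ℝ → ℝ → ℝ → ℝ → ℝ) : Prop :=
  (∀ (n n' : ℕ) (F F' T T' α α' A A' M M' : ℝ),
      n ≤ n' → 0 ≤ F → F ≤ F' → 0 ≤ T → T ≤ T' → 0 ≤ α → α ≤ α' →
      0 ≤ A → A ≤ A' → 0 ≤ M → M ≤ M' →
      C n F T α A M ≤ C n' F' T' α' A' M') ∧
  (∀ (n : ℕ) (F T α A M : ℝ), 0 ≤ F → 0 ≤ T → 0 ≤ α → 0 ≤ A → 0 ≤ M →
      0 ≤ C n F T α A M)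

/-- The relative-bound property of `C` from Proposition `prop:borne reformule (i)`:
for every admissible kernel, bounded smooth external field and collapse-free solution
of the perturbed point-vortex system with `A₀ ≠ 0`, the relative displacements are
bounded by `C(N, ‖f‖_∞, T, a, 1/A₀, sup_{r≥1}|G'|)`. -/
def RelativeBoundProperty (N : ℕ) (C : ℕ → ℝ → ℝ → ℝ → ℝ → ℝ → ℝ) : Prop :=
  ∀ (a : Fin N → ℝ), (∀ i, a i ≠ 0) → minProperClusterSum N a ≠ 0 →
  ∀ G : ℝ → ℝ, KernelRegular G →
  ∀ M : ℝ, 0 ≤ M → (∀ r : ℝ, 1 ≤ r → |deriv G r| ≤ M) →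
  ∀ T : ℝ, 0 < T →
  ∀ f : ℝ → Plane → Plane,
    ContDiffOn ℝ (⊤ : ℕ∞) (fun p : ℝ × Plane => f p.1 p.2) (Set.Ico 0 T ×ˢ Set.univ) →
  ∀ F : ℝ, 0 ≤ F → (∀ t ∈ Set.Ico (0 : ℝ) T, ∀ y : Plane, ‖f t y‖ ≤ F) →
  ∀ x : Fin N → ℝ → Plane, IsPerturbedVortexSolution N a G T f x →
  ∀ t ∈ Set.Ico (0 : ℝ) T, ∀ i j : Fin N,
    ‖(x i t - x j t) - (x i 0 - x j 0)‖ ≤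
      C N F T (∑ k : Fin N, |a k|) (1 / minProperClusterSum N a) M

open Set

lemma norm_perp (v : Plane) : ‖perp v‖ = ‖v‖ := by
  simp [EuclideanSpace.norm_eq, perp, Fin.sum_univ_two, add_comm]

lemma perp_neg (v : Plane) : perp (-v) = -perp v := by
  ext i
  fin_cases i <;> simp [perp]

lemma gradPerp_zero (K : ℝ → ℝ) : gradPerp K 0 = 0 := by
  simp [gradPerp]

lemma gradPerp_neg (K : ℝ → ℝ) (y : Plane) : gradPerp K (-y) = -gradPerp K y := by
  simp [gradPerp, perp_neg]

lemma norm_gradPerp (K : ℝ → ℝ) {y : Plane} (hy : y ≠ 0) : ‖gradPerp K y‖ = |deriv K ‖y‖| := by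
  rw [gradPerp, norm_smul, norm_perp, Real.norm_eq_abs, abs_div, abs_norm,
    div_mul_cancel₀ _ (norm_ne_zero_iff.2 hy)]

section Cluster

variable {ι : Type*} (a : ι → ℝ) {E : Type*} [NormedAddCommGroup E] [NormedSpace ℝ E]

/-- The center of vorticity of `Q`; junk (`0⁻¹ = 0`) when the intensities of `Q` sum to `0`. -/
def clusterCenter (Q : Finset ι) (y : ι → E) : E :=
  (∑ i ∈ Q, a i)⁻¹ • ∑ i ∈ Q, a i • y i

lemma clusterCenter_sub (Q : Finset ι) (y y' : ι → E) :
    clusterCenter a Q (fun k => y k - y' k) = clusterCenter a Q y - clusterCenter a Q y' := by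
  simp only [clusterCenter, smul_sub, Finset.sum_sub_distrib]

lemma clusterCenter_const {Q : Finset ι} (hQ : ∑ i ∈ Q, a i ≠ 0) (v : E) :
    clusterCenter a Q (fun _ => v) = v := by
  rw [clusterCenter, ← Finset.sum_smul, inv_smul_smul₀ hQ]

lemma sub_clusterCenter {Q : Finset ι} (hQ : ∑ i ∈ Q, a i ≠ 0) (y : ι → E) (p : ι) :
    y p - clusterCenter a Q y = clusterCenter a Q (fun k => y p - y k) := by
  rw [clusterCenter_sub, clusterCenter_const a hQ]

variable (G : ℝ → ℝ)

def inducedVelocity (P : Finset ι) (y : ι → Plane) (i : ι) : Plane :=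
  ∑ j ∈ P, a j • gradPerp G (y i - y j)

lemma sum_erase_eq_inducedVelocity [DecidableEq ι] (P : Finset ι) (y : ι → Plane) (i : ι) :
    ∑ j ∈ P.erase i, a j • gradPerp G (y i - y j) = inducedVelocity a G P y i :=
  Finset.sum_erase _ (by simp [gradPerp_zero])

lemma sum_smul_inducedVelocity (Q : Finset ι) (y : ι → Plane) :
    ∑ i ∈ Q, a i • inducedVelocity a G Q y i = 0 := by
  set S := ∑ i ∈ Q, a i • inducedVelocity a G Q y i with hS
  -- exchanging `i` and `j` flips the sign of each term, since `gradPerp G` is odd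
  have hneg : S = -S := by
    simp only [hS, inducedVelocity, Finset.smul_sum, smul_smul, ← Finset.sum_neg_distrib]
    rw [Finset.sum_comm]
    refine Finset.sum_congr rfl fun i _ => Finset.sum_congr rfl fun j _ => ?_
    rw [← neg_sub (y i), gradPerp_neg, smul_neg, mul_comm (a j)]
  have h2 : (2 : ℝ) • S = 0 := by
    rw [two_smul]
    nth_rw 2 [hneg]
    exact add_neg_cancel S
  exact (smul_eq_zero.1 h2).resolve_left two_ne_zero

lemma clusterCenter_inducedVelocity (Q : Finset ι) (y : ι → Plane) :
    clusterCenter a Q (inducedVelocity a G Q y) = 0 := by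
  rw [clusterCenter, sum_smul_inducedVelocity, smul_zero]

lemma inducedVelocity_sub_inducedVelocity [DecidableEq ι] {P Q : Finset ι} (hQP : Q ⊆ P)
    (y : ι → Plane) (i : ι) :
    inducedVelocity a G P y i - inducedVelocity a G Q y i =
      ∑ j ∈ P \ Q, a j • gradPerp G (y i - y j) := by
  rw [inducedVelocity, inducedVelocity, ← Finset.sum_sdiff hQP, add_sub_cancel_right]

variable [Fintype ι] {a}

lemma norm_sum_smul_le {α Y : ℝ} (hα : ∑ k, |a k| ≤ α) (hY : 0 ≤ Y) {s : Finset ι}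
    {w : ι → E} (hw : ∀ k ∈ s, ‖w k‖ ≤ Y) : ‖∑ k ∈ s, a k • w k‖ ≤ α * Y :=
  calc ‖∑ k ∈ s, a k • w k‖ ≤ ∑ k ∈ s, |a k| * Y := norm_sum_le_of_le s fun k hk => by
        rw [norm_smul, Real.norm_eq_abs]
        exact mul_le_mul_of_nonneg_left (hw k hk) (abs_nonneg _)
    _ = (∑ k ∈ s, |a k|) * Y := (Finset.sum_mul ..).symm
    _ ≤ α * Y := mul_le_mul_of_nonneg_right
        ((Finset.sum_le_univ_sum_of_nonneg fun k => abs_nonneg _).trans hα) hY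

lemma norm_clusterCenter_le {α β Y : ℝ} (hα : ∑ k, |a k| ≤ α) {Q : Finset ι} (hQ : Q.Nonempty)
    (hβ : 1 ≤ β * |∑ i ∈ Q, a i|) {w : ι → E} (hw : ∀ k ∈ Q, ‖w k‖ ≤ Y) :
    ‖clusterCenter a Q w‖ ≤ α * β * Y := by
  obtain ⟨k, hk⟩ := hQ
  have hY : 0 ≤ Y := (norm_nonneg _).trans (hw k hk)
  have hα0 : 0 ≤ α := (Finset.sum_nonneg fun k _ => abs_nonneg (a k)).trans hα
  have hS : 0 < |∑ i ∈ Q, a i| :=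
    (abs_nonneg _).lt_of_ne fun h => by rw [← h, mul_zero] at hβ; linarith
  rw [clusterCenter, norm_smul, norm_inv, Real.norm_eq_abs]
  calc |∑ i ∈ Q, a i|⁻¹ * ‖∑ i ∈ Q, a i • w i‖ ≤ |∑ i ∈ Q, a i|⁻¹ * (α * Y) :=
        mul_le_mul_of_nonneg_left (norm_sum_smul_le hα hY hw) (by positivity)
    _ ≤ β * (α * Y) := mul_le_mul_of_nonneg_right ((inv_le_iff_one_le_mul₀ hS).2 hβ)
        (by positivity)
    _ = α * β * Y := by ring

lemma norm_inducedVelocity_sub_le [DecidableEq ι] {α M : ℝ} (hα : ∑ k, |a k| ≤ α)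
    (hM : ∀ r, 1 ≤ r → |deriv G r| ≤ M) {P Q : Finset ι} (hQP : Q ⊆ P) {y : ι → Plane} {i : ι}
    (hsep : ∀ q ∈ P \ Q, 1 ≤ ‖y i - y q‖) :
    ‖inducedVelocity a G P y i - inducedVelocity a G Q y i‖ ≤ α * M := by
  rw [inducedVelocity_sub_inducedVelocity a G hQP]
  refine norm_sum_smul_le hα ((abs_nonneg _).trans (hM 1 le_rfl)) fun q hq => ?_
  have hq1 := hsep q hq
  rw [norm_gradPerp G (norm_pos_iff.1 (zero_lt_one.trans_le hq1))]
  exact hM _ hq1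

end Cluster

/-- `α`, `β`, `M` play the roles of `a = Σ |a_i|`, `1 / A₀` and `sup_{r ≥ 1} |G'(r)|`. -/
structure AdmissibleConstants {ι : Type*} [Fintype ι] (a : ι → ℝ) (G : ℝ → ℝ) (α β M : ℝ) :
    Prop where
  sum_abs_le : ∑ k, |a k| ≤ α
  beta_nonneg : 0 ≤ β
  one_le_mul_abs_sum : ∀ Q : Finset ι, Q.Nonempty → Q ≠ Finset.univ → 1 ≤ β * |∑ i ∈ Q, a i|
  abs_deriv_le : ∀ r, 1 ≤ r → |deriv G r| ≤ M

namespace AdmissibleConstants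

variable {ι : Type*} [Fintype ι] {a : ι → ℝ} {G : ℝ → ℝ} {α β M : ℝ}

lemma alpha_nonneg (hc : AdmissibleConstants a G α β M) : 0 ≤ α :=
  (Finset.sum_nonneg fun k _ => abs_nonneg (a k)).trans hc.sum_abs_le

lemma M_nonneg (hc : AdmissibleConstants a G α β M) : 0 ≤ M :=
  (abs_nonneg _).trans (hc.abs_deriv_le 1 le_rfl)

lemma sum_ne_zero (hc : AdmissibleConstants a G α β M) {Q : Finset ι} (hQ : Q.Nonempty)
    (hQ' : Q ≠ Finset.univ) : ∑ i ∈ Q, a i ≠ 0 := fun h => by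
  have h1 := hc.one_le_mul_abs_sum Q hQ hQ'
  rw [h, abs_zero, mul_zero] at h1
  linarith

end AdmissibleConstants

section Motion

variable {ι : Type*} (a : ι → ℝ) (G : ℝ → ℝ)

/-- The vortices of `P` move under their mutual interaction, up to an error of size `F` that
absorbs the external field and the vortices outside `P`. -/
def IsPerturbedClusterMotion (P : Finset ι) (F : ℝ) (x : ι → ℝ → Plane) (I : Set ℝ) : Prop :=
  ∀ i ∈ P, ∀ s ∈ I, ∃ v, HasDerivWithinAt (x i) v I s ∧
    ‖v - inducedVelocity a G P (fun k => x k s) i‖ ≤ F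

variable {a G} {P Q : Finset ι} {F : ℝ} {x : ι → ℝ → Plane} {I J : Set ℝ}

namespace IsPerturbedClusterMotion

lemma mono (h : IsPerturbedClusterMotion a G P F x I) (hJI : J ⊆ I) :
    IsPerturbedClusterMotion a G P F x J := fun i hi s hs =>
  let ⟨v, hv, hvF⟩ := h i hi s (hJI hs)
  ⟨v, hv.mono hJI, hvF⟩

lemma continuousOn (h : IsPerturbedClusterMotion a G P F x I) {i : ι} (hi : i ∈ P) :
    ContinuousOn (x i) I := fun s hs =>
  let ⟨_, hv, _⟩ := h i hi s hs
  hv.continuousWithinAt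

variable [Fintype ι] {α β M : ℝ}

lemma of_separated [DecidableEq ι] (hc : AdmissibleConstants a G α β M)
    (h : IsPerturbedClusterMotion a G P F x I) (hQP : Q ⊆ P)
    (hsep : ∀ s ∈ I, ∀ p ∈ Q, ∀ q ∈ P \ Q, 1 ≤ ‖x p s - x q s‖) :
    IsPerturbedClusterMotion a G Q (F + α * M) x I := fun i hi s hs =>
  let ⟨v, hv, hvF⟩ := h i (hQP hi) s hs
  ⟨v, hv, (norm_sub_le_norm_sub_add_norm_sub _ _ _).trans <| add_le_add hvF <|
    norm_inducedVelocity_sub_le G hc.sum_abs_le hc.abs_deriv_le hQP (hsep s hs i hi)⟩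

lemma norm_clusterCenter_sub_le (hc : AdmissibleConstants a G α β M) {s e : ℝ}
    (h : IsPerturbedClusterMotion a G Q F x (Icc s e)) (hQ : Q.Nonempty)
    (hQ' : Q ≠ Finset.univ) {w : ℝ} (hw : w ∈ Icc s e) :
    ‖clusterCenter a Q (fun k => x k w) - clusterCenter a Q (fun k => x k s)‖ ≤
      α * β * F * (w - s) := by
  choose! v hv hvF using h
  refine norm_image_sub_le_of_norm_deriv_le_segment'
    (f := fun r => clusterCenter a Q fun k => x k r)
    (f' := fun r => clusterCenter a Q fun k => v k r) (fun r hr => ?_) (fun r hr => ?_) w hw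
  · exact (HasDerivWithinAt.fun_sum fun k hk => (hv k hk r hr).const_smul (a k)).fun_const_smul _
  · -- the internal velocities do not move the center
    rw [← sub_zero (clusterCenter a Q _), ← clusterCenter_inducedVelocity a G Q (fun k => x k r),
      ← clusterCenter_sub]
    exact norm_clusterCenter_le hc.sum_abs_le hQ (hc.one_le_mul_abs_sum Q hQ hQ')
      fun k hk => hvF k hk r (Ico_subset_Icc_self hr)

end IsPerturbedClusterMotion

end Motion

lemma exists_separated_subset {ι E : Type*} [DecidableEq ι] [SeminormedAddCommGroup E] (y : ι → E)
    {P : Finset ι} {i j : ι} (hi : i ∈ P) {r : ℝ} (hr : 0 < r)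
    (hij : r * (P.card + 1) ≤ ‖y i - y j‖) :
    ∃ Q ⊆ P, i ∈ Q ∧ j ∉ Q ∧ ∀ p ∈ Q, ∀ q ∈ P \ Q, r ≤ ‖y p - y q‖ := by
  set ρ : ι → ℝ := fun q => ‖y q - y i‖ with hρ
  -- some distance shell `[r k, r (k + 1))` around `y i` with `1 ≤ k ≤ #P + 1` is empty
  obtain ⟨k, hk, hkP⟩ := Finset.exists_mem_notMem_of_card_lt_card
    (s := P.image fun q => ⌊ρ q / r⌋₊) (t := Finset.Icc 1 (P.card + 1))
    (by simpa using Finset.card_image_le.trans_lt (Nat.lt_succ_self P.card))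
  rw [Finset.mem_Icc] at hk
  have hk1 : (1 : ℝ) ≤ k := by exact_mod_cast hk.1
  refine ⟨P.filter fun q => ρ q < r * k, Finset.filter_subset _ _, ?_, ?_, ?_⟩
  · simp only [Finset.mem_filter, hρ, sub_self, norm_zero]
    exact ⟨hi, by positivity⟩
  · simp only [Finset.mem_filter, not_and, not_lt]
    intro _
    have hkP' : (k : ℝ) ≤ P.card + 1 := by exact_mod_cast hk.2
    show r * k ≤ ‖y j - y i‖
    rw [norm_sub_rev]
    nlinarith
  · intro p hp q hq
    simp only [Finset.mem_sdiff, Finset.mem_filter, not_and, not_lt] at hp hq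
    have hkq : r * k ≤ ρ q := hq.2 hq.1
    have hfloor : k + 1 ≤ ⌊ρ q / r⌋₊ := by
      have hle : k ≤ ⌊ρ q / r⌋₊ := Nat.le_floor (by rw [le_div_iff₀ hr]; linarith)
      have hne : ⌊ρ q / r⌋₊ ≠ k := fun h => hkP (Finset.mem_image.2 ⟨q, hq.1, h⟩)
      omega
    rw [Nat.le_floor_iff (by positivity), le_div_iff₀ hr] at hfloor
    push_cast at hfloor
    calc r ≤ ρ q - ρ p := by nlinarith [hp.2]
      _ ≤ ‖y p - y q‖ := by
        simpa [hρ, norm_sub_rev (y p)] using norm_sub_norm_le (y q - y i) (y p - y i)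

lemma exists_first_hitting_time {κ : Type*} {K : Finset κ} {g : κ → ℝ → ℝ} {c s e : ℝ}
    (hg : ∀ k ∈ K, ContinuousOn (g k) (Icc s e)) (hs : ∀ k ∈ K, c < g k s) (hse : s ≤ e) :
    ∃ σ ∈ Icc s e, (∀ w ∈ Icc s σ, ∀ k ∈ K, c ≤ g k w) ∧ (σ = e ∨ ∃ k ∈ K, g k σ ≤ c) := by
  set U := (⋃ k ∈ K, Icc s e ∩ g k ⁻¹' Iic c) ∪ {e}
  have hU : IsClosed U := (isClosed_biUnion_finset fun k hk =>
    (hg k hk).preimage_isClosed_of_isClosed isClosed_Icc isClosed_Iic).union isClosed_singleton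
  have hne : U.Nonempty := ⟨e, Or.inr rfl⟩
  have hlow : ∀ w ∈ U, s ≤ w := by
    rintro w (hw | rfl)
    · obtain ⟨k, -, hw, -⟩ := mem_iUnion₂.1 hw
      exact hw.1
    · exact hse
  have hbdd : BddBelow U := ⟨s, hlow⟩
  have hmem : sInf U ∈ U := hU.csInf_mem hne hbdd
  have hσe : sInf U ≤ e := csInf_le hbdd (Or.inr rfl)
  have hsσ : s ≤ sInf U := le_csInf hne hlow
  have hbefore : ∀ w ∈ Ico s (sInf U), ∀ k ∈ K, c < g k w := fun w hw k hk =>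
    lt_of_not_ge fun hle => hw.2.not_ge
      (csInf_le hbdd (Or.inl (mem_iUnion₂.2 ⟨k, hk, ⟨hw.1, hw.2.le.trans hσe⟩, hle⟩)))
  generalize sInf U = σ at hmem hσe hsσ hbefore
  refine ⟨σ, ⟨hsσ, hσe⟩, fun w hw k hk => ?_, ?_⟩
  · rcases hw.2.lt_or_eq with hwσ | hwσ
    · exact (hbefore w ⟨hw.1, hwσ⟩ k hk).le
    rw [hwσ]
    rcases hsσ.lt_or_eq with hsσ' | hsσ'
    · have hcl : closure (Ico s σ) = Icc s σ := closure_Ico hsσ'.ne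
      exact le_on_closure (fun v hv => (hbefore v hv k hk).le) continuousOn_const
        (hcl ▸ (hg k hk).mono (Icc_subset_Icc_right hσe)) (hcl ▸ right_mem_Icc.2 hsσ)
    · rw [← hsσ']
      exact (hs k hk).le
  · rcases hmem with hσ | hσ
    · obtain ⟨k, hk, -, hle⟩ := mem_iUnion₂.1 hσ
      exact Or.inr ⟨k, hk, hle⟩
    · exact Or.inl hσ

lemma norm_sub_le_of_forall_Ioo {E : Type*} [NormedAddCommGroup E] {y : ℝ → E}
    {t₀ t₁ Λ B : ℝ} (hy : ContinuousOn y (Icc t₀ t₁)) (ht : t₀ ≤ t₁) (hΛ : 0 ≤ Λ)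
    (hB : ∀ s ∈ Icc t₀ t₁, ∀ e ∈ Icc s t₁, (∀ w ∈ Ioo s e, Λ ≤ ‖y w‖) → ‖y e - y s‖ ≤ B) :
    ‖y t₁ - y t₀‖ ≤ 2 * B + 2 * Λ := by
  set C := {w ∈ Icc t₀ t₁ | ‖y w‖ ≤ Λ}
  have hC : IsClosed C := hy.norm.preimage_isClosed_of_isClosed isClosed_Icc isClosed_Iic
  have hfar : ∀ w ∈ Icc t₀ t₁, w ∉ C → Λ ≤ ‖y w‖ := fun w hw hwC =>
    le_of_lt (not_le.1 fun h => hwC ⟨hw, h⟩)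
  have hB0 : 0 ≤ B := by simpa using hB t₀ ⟨le_rfl, ht⟩ t₀ ⟨le_rfl, ht⟩ (by simp)
  rcases C.eq_empty_or_nonempty with hC0 | hCne
  · have := hB t₀ ⟨le_rfl, ht⟩ t₁ ⟨ht, le_rfl⟩ fun w hw =>
      hfar w (Ioo_subset_Icc_self hw) (hC0 ▸ notMem_empty w)
    linarith
  -- otherwise cut `[t₀, t₁]` at the first and the last time when `y` is small
  have hbddb : BddBelow C := ⟨t₀, fun w hw => hw.1.1⟩
  have hbdda : BddAbove C := ⟨t₁, fun w hw => hw.1.2⟩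
  have hv : sInf C ∈ C := hC.csInf_mem hCne hbddb
  have hu : sSup C ∈ C := hC.csSup_mem hCne hbdda
  have hvu : sInf C ≤ sSup C := csInf_le_csSup hCne hbddb hbdda
  have h₁ := hB t₀ ⟨le_rfl, ht⟩ (sInf C) ⟨hv.1.1, hv.1.2⟩ fun w hw =>
    hfar w ⟨hw.1.le, hw.2.le.trans hv.1.2⟩ fun hwC => hw.2.not_ge (csInf_le hbddb hwC)
  have h₃ := hB (sSup C) hu.1 t₁ ⟨hu.1.2, le_rfl⟩ fun w hw =>
    hfar w ⟨hv.1.1.trans (hvu.trans hw.1.le), hw.2.le⟩ fun hwC => hw.1.not_ge (le_csSup hbdda hwC)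
  have h₂ : ‖y (sSup C) - y (sInf C)‖ ≤ 2 * Λ :=
    (norm_sub_le _ _).trans (by linarith [hu.2, hv.2])
  calc ‖y t₁ - y t₀‖ ≤ ‖y t₁ - y (sSup C)‖ + ‖y (sSup C) - y t₀‖ :=
        norm_sub_le_norm_sub_add_norm_sub _ _ _
    _ ≤ ‖y t₁ - y (sSup C)‖ + (‖y (sSup C) - y (sInf C)‖ + ‖y (sInf C) - y t₀‖) :=
        add_le_add_right (norm_sub_le_norm_sub_add_norm_sub _ _ _) _
    _ ≤ 2 * B + 2 * Λ := by linarith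

/-- `D` bounds the drift of a vortex relative to the center of its subcluster and `V` the speed
of that center. Besides the term making the bound monotone in `m`, `relBound (m + 1)` is twice the
bound over a stretch where the pair stays far apart (made of at most `2 V T + 2` successive
splits) plus twice the far-threshold `2 (D + 1) (m + 2)`. -/
def relBound : ℕ → ℝ → ℝ → ℝ → ℝ → ℝ → ℝ
  | 0, _, _, _, _, _ => 0
  | m + 1, F, T, α, β, M =>
    let D := α * β * relBound m (F + α * M) T α β M
    let V := α * β * (F + α * M)
    relBound m F T α β M + 4 * (D + 1) * (m + 2) + 4 * ((2 * V * T + 2) * D + V * T)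

lemma relBound_nonneg (m : ℕ) {F T α β M : ℝ} (hF : 0 ≤ F) (hT : 0 ≤ T) (hα : 0 ≤ α)
    (hβ : 0 ≤ β) (hM : 0 ≤ M) : 0 ≤ relBound m F T α β M := by
  induction m generalizing F with
  | zero => exact le_rfl
  | succ m ih =>
    have := ih hF
    have := ih (F := F + α * M) (by positivity)
    simp only [relBound]
    positivity

lemma relBound_le_succ (m : ℕ) {F T α β M : ℝ} (hF : 0 ≤ F) (hT : 0 ≤ T) (hα : 0 ≤ α)
    (hβ : 0 ≤ β) (hM : 0 ≤ M) : relBound m F T α β M ≤ relBound (m + 1) F T α β M := by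
  have := relBound_nonneg m (F := F + α * M) (by positivity) hT hα hβ hM
  simp only [relBound]
  rw [add_assoc]
  exact le_add_of_nonneg_right (by positivity)

lemma relBound_mono (m : ℕ) {F F' T T' α α' β β' M M' : ℝ} (hF : 0 ≤ F) (hF' : F ≤ F')
    (hT : 0 ≤ T) (hT' : T ≤ T') (hα : 0 ≤ α) (hα' : α ≤ α') (hβ : 0 ≤ β) (hβ' : β ≤ β')
    (hM : 0 ≤ M) (hM' : M ≤ M') : relBound m F T α β M ≤ relBound m F' T' α' β' M' := by
  have := hα.trans hα'
  have := hβ.trans hβ'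
  have := hM.trans hM'
  have := hT.trans hT'
  induction m generalizing F F' with
  | zero => exact le_rfl
  | succ m ih =>
    have := hF.trans hF'
    have := ih hF hF'
    have := ih (F := F + α * M) (F' := F' + α' * M') (by positivity) (by gcongr)
    have := relBound_nonneg m hF hT hα hβ hM
    have := relBound_nonneg m (F := F + α * M) (by positivity) hT hα hβ hM
    simp only [relBound]
    gcongr

lemma monotoneNonnegConstant_relBound : MonotoneNonnegConstant relBound := by
  refine ⟨fun n n' F F' T T' α α' β β' M M' hn hF hF' hT hT' hα hα' hβ hβ' hM hM' => ?_,
    fun n F T α β M hF hT hα hβ hM => relBound_nonneg n hF hT hα hβ hM⟩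
  refine (relBound_mono n hF hF' hT hT' hα hα' hβ hβ' hM hM').trans ?_
  exact monotone_nat_of_le_succ (fun k => relBound_le_succ k (hF.trans hF') (hT.trans hT')
    (hα.trans hα') (hβ.trans hβ') (hM.trans hM')) hn

def DisplacementBounded {ι : Type*} (a : ι → ℝ) (G : ℝ → ℝ) (x : ι → ℝ → Plane) (n : ℕ)
    (F T C : ℝ) : Prop :=
  ∀ P : Finset ι, P.card ≤ n → ∀ t₀ t₁ : ℝ, t₁ - t₀ ≤ T →
    IsPerturbedClusterMotion a G P F x (Icc t₀ t₁) →
    ∀ s ∈ Icc t₀ t₁, ∀ i ∈ P, ∀ j ∈ P, ‖(x i s - x j s) - (x i t₀ - x j t₀)‖ ≤ C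

section Induction

variable {ι : Type*} [Fintype ι] [DecidableEq ι] {a : ι → ℝ} {G : ℝ → ℝ}
  {x : ι → ℝ → Plane} {α β M : ℝ} {m : ℕ} {F T C : ℝ} {P Q : Finset ι} {s e : ℝ}

lemma norm_sub_le_of_separated (hc : AdmissibleConstants a G α β M)
    (hC : DisplacementBounded a G x m (F + α * M) T C) (hQP : Q ⊆ P) (hQ : Q.Nonempty)
    (hQ' : Q ≠ Finset.univ) (hcard : Q.card ≤ m)
    (h : IsPerturbedClusterMotion a G P F x (Icc s e)) (hT : e - s ≤ T)
    (hsep : ∀ w ∈ Icc s e, ∀ p ∈ Q, ∀ q ∈ P \ Q, 1 ≤ ‖x p w - x q w‖) {p : ι} (hp : p ∈ Q)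
    {w : ℝ} (hw : w ∈ Icc s e) :
    ‖x p w - x p s‖ ≤ α * β * C + α * β * (F + α * M) * (w - s) := by
  have hS := hc.sum_ne_zero hQ hQ'
  have hQmot := h.of_separated hc hQP hsep
  set c := fun r => clusterCenter a Q fun k => x k r
  have hinternal : ‖(x p w - c w) - (x p s - c s)‖ ≤ α * β * C := by
    rw [sub_clusterCenter a hS (fun k => x k w) p, sub_clusterCenter a hS (fun k => x k s) p,
      ← clusterCenter_sub]
    exact norm_clusterCenter_le hc.sum_abs_le hQ (hc.one_le_mul_abs_sum Q hQ hQ')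
      fun k hk => hC Q hcard s e hT hQmot w hw p hp k hk
  have hdrift := hQmot.norm_clusterCenter_sub_le hc hQ hQ' hw
  calc ‖x p w - x p s‖ = ‖((x p w - c w) - (x p s - c s)) + (c w - c s)‖ := by congr 1; abel
    _ ≤ _ := (norm_add_le _ _).trans (add_le_add hinternal hdrift)

lemma norm_displacement_le_of_separated (hc : AdmissibleConstants a G α β M)
    (hC : DisplacementBounded a G x m (F + α * M) T C) (hQP : Q ⊆ P) (hcardQ : Q.card ≤ m)
    (hcardQ' : (P \ Q).card ≤ m) (h : IsPerturbedClusterMotion a G P F x (Icc s e))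
    (hT : e - s ≤ T) (hsep : ∀ w ∈ Icc s e, ∀ p ∈ Q, ∀ q ∈ P \ Q, 1 ≤ ‖x p w - x q w‖)
    {p q : ι} (hp : p ∈ Q) (hq : q ∈ P \ Q) {w : ℝ} (hw : w ∈ Icc s e) :
    ‖(x p w - x q w) - (x p s - x q s)‖ ≤
      2 * (α * β * C) + 2 * (α * β * (F + α * M)) * (w - s) := by
  have hsep' : ∀ w ∈ Icc s e, ∀ q ∈ P \ Q, ∀ p ∈ P \ (P \ Q), 1 ≤ ‖x q w - x p w‖ := by
    intro w hw q hq p hp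
    rw [Finset.sdiff_sdiff_eq_self hQP] at hp
    rw [norm_sub_rev]
    exact hsep w hw p hp q hq
  have hp' := norm_sub_le_of_separated hc hC hQP ⟨p, hp⟩
    (fun hQ => (Finset.mem_sdiff.1 hq).2 (hQ ▸ Finset.mem_univ q)) hcardQ h hT hsep hp hw
  have hq' := norm_sub_le_of_separated hc hC Finset.sdiff_subset ⟨q, hq⟩
    (fun hQ => (Finset.mem_sdiff.1 (hQ ▸ Finset.mem_univ p)).2 hp) hcardQ' h hT hsep' hq hw
  calc ‖(x p w - x q w) - (x p s - x q s)‖ = ‖(x p w - x p s) - (x q w - x q s)‖ := by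
        congr 1; abel
    _ ≤ ‖x p w - x p s‖ + ‖x q w - x q s‖ := norm_sub_le _ _
    _ ≤ _ := by linarith

lemma exists_stopping_time (hc : AdmissibleConstants a G α β M)
    (hC : DisplacementBounded a G x m (F + α * M) T C) (hC0 : 0 ≤ C) (hcard : P.card ≤ m + 1)
    {i j : ι} (hi : i ∈ P) (hj : j ∈ P) (h : IsPerturbedClusterMotion a G P F x (Icc s e))
    (hse : s ≤ e) (hT : e - s ≤ T) (hfar : 2 * (α * β * C + 1) * (m + 2) ≤ ‖x i s - x j s‖) :
    ∃ σ ∈ Icc s e, ‖(x i σ - x j σ) - (x i s - x j s)‖ ≤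
        2 * (α * β * C) + 2 * (α * β * (F + α * M)) * (σ - s) ∧
      (σ = e ∨ 1 ≤ 2 * (α * β * (F + α * M)) * (σ - s)) := by
  have := hc.alpha_nonneg
  have := hc.beta_nonneg
  have hD : 0 ≤ α * β * C := by positivity
  obtain ⟨Q, hQP, hiQ, hjQ, hgap⟩ := exists_separated_subset (fun k => x k s) hi
    (r := 2 * (α * β * C + 1)) (by positivity) (by
      have : (P.card : ℝ) + 1 ≤ m + 2 := by exact_mod_cast (by omega : P.card + 1 ≤ m + 2)
      calc _ ≤ 2 * (α * β * C + 1) * (m + 2) := by gcongr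
        _ ≤ _ := hfar)
  have hjQ' : j ∈ P \ Q := Finset.mem_sdiff.2 ⟨hj, hjQ⟩
  have hcardQ : Q.card ≤ m := by
    have := Finset.card_lt_card ((Finset.ssubset_iff_of_subset hQP).2 ⟨j, hj, hjQ⟩)
    omega
  have hcardQ' : (P \ Q).card ≤ m := by
    have := Finset.card_pos.2 ⟨i, hiQ⟩
    rw [Finset.card_sdiff_of_subset hQP]
    omega
  obtain ⟨σ, hσ, hsep, hstop⟩ := exists_first_hitting_time (K := Q ×ˢ (P \ Q))
    (g := fun pq w => ‖x pq.1 w - x pq.2 w‖) (c := 1)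
    (fun pq hpq => ((h.continuousOn (hQP (Finset.mem_product.1 hpq).1)).sub
      (h.continuousOn (Finset.sdiff_subset (Finset.mem_product.1 hpq).2))).norm)
    (fun pq hpq => by
      linarith [hgap _ (Finset.mem_product.1 hpq).1 _ (Finset.mem_product.1 hpq).2]) hse
  have hdisp := fun {p q : ι} (hp : p ∈ Q) (hq : q ∈ P \ Q) =>
    norm_displacement_le_of_separated hc hC hQP hcardQ hcardQ'
      (h.mono (Icc_subset_Icc_right hσ.2)) (by linarith [hσ.2])
      (fun w hw p hp q hq => hsep w hw (p, q) (Finset.mem_product.2 ⟨hp, hq⟩)) hp hq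
      (right_mem_Icc.2 hσ.1)
  refine ⟨σ, hσ, hdisp hiQ hjQ', hstop.imp_right ?_⟩
  -- a pair `2 (D + 1)` apart at time `s` is within `1` at time `σ`, so the drift term is `≥ 1`
  rintro ⟨⟨p, q⟩, hpq, hclose⟩
  simp only [Finset.mem_product] at hpq hclose
  have h1 := hdisp hpq.1 hpq.2
  have h2 := hgap p hpq.1 q hpq.2
  have h3 := norm_sub_norm_le (x p s - x q s) (x p σ - x q σ)
  rw [norm_sub_rev (x p s - x q s)] at h3
  linarith

lemma norm_displacement_le_of_far_of_le (hc : AdmissibleConstants a G α β M)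
    (hC : DisplacementBounded a G x m (F + α * M) T C) (hC0 : 0 ≤ C) (hF : 0 ≤ F)
    (hcard : P.card ≤ m + 1) {i j : ι} (hi : i ∈ P) (hj : j ∈ P) (κ : ℕ)
    (h : IsPerturbedClusterMotion a G P F x (Icc s e)) (hse : s ≤ e) (hT : e - s ≤ T)
    (hfar : ∀ w ∈ Ioo s e, 2 * (α * β * C + 1) * (m + 2) ≤ ‖x i w - x j w‖)
    (hκ : 2 * (α * β * (F + α * M)) * (e - s) ≤ κ) :
    ‖(x i e - x j e) - (x i s - x j s)‖ ≤
      (κ + 1) * (2 * (α * β * C)) + 2 * (α * β * (F + α * M)) * (e - s) := by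
  have := hc.alpha_nonneg
  have := hc.beta_nonneg
  have := hc.M_nonneg
  have hD : 0 ≤ α * β * C := by positivity
  have hV : 0 ≤ α * β * (F + α * M) := by positivity
  -- `κ` bounds the number of stopping times before `e`, as consecutive ones are `1 / (2 V)` apart
  induction κ using Nat.strong_induction_on generalizing s with
  | _ κ ih =>
  have hκ0 : (0 : ℝ) ≤ κ := κ.cast_nonneg
  rcases hse.lt_or_eq with hse | hse
  swap
  · rw [hse, sub_self, sub_self, norm_zero]
    positivity
  have hfar_s : 2 * (α * β * C + 1) * (m + 2) ≤ ‖x i s - x j s‖ := by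
    have hcl : closure (Ioo s e) = Icc s e := closure_Ioo hse.ne
    exact le_on_closure hfar continuousOn_const
      (hcl ▸ ((h.continuousOn hi).sub (h.continuousOn hj)).norm) (hcl ▸ left_mem_Icc.2 hse.le)
  obtain ⟨σ, hσ, hdisp, hstop⟩ := exists_stopping_time hc hC hC0 hcard hi hj h hse.le hT hfar_s
  rcases hstop with hσe | hstop
  · rw [← hσe]
    nlinarith
  obtain ⟨κ', rfl⟩ : ∃ κ', κ = κ' + 1 := Nat.exists_eq_add_one.2 (by
    have : (0 : ℝ) < κ := by nlinarith [hσ.2]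
    exact_mod_cast this)
  push_cast at hκ ⊢
  have hrest := ih κ' (Nat.lt_succ_self κ') (h.mono (Icc_subset_Icc_left hσ.1)) hσ.2
    (by linarith [hσ.1]) (fun w hw => hfar w ⟨hσ.1.trans_lt hw.1, hw.2⟩) (by nlinarith)
  calc ‖(x i e - x j e) - (x i s - x j s)‖ ≤
        ‖(x i e - x j e) - (x i σ - x j σ)‖ + ‖(x i σ - x j σ) - (x i s - x j s)‖ :=
        norm_sub_le_norm_sub_add_norm_sub _ _ _
    _ ≤ _ := by nlinarith

lemma norm_displacement_le_of_far (hc : AdmissibleConstants a G α β M)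
    (hC : DisplacementBounded a G x m (F + α * M) T C) (hC0 : 0 ≤ C) (hF : 0 ≤ F)
    (hcard : P.card ≤ m + 1) {i j : ι} (hi : i ∈ P) (hj : j ∈ P)
    (h : IsPerturbedClusterMotion a G P F x (Icc s e)) (hse : s ≤ e) (hT : e - s ≤ T)
    (hfar : ∀ w ∈ Ioo s e, 2 * (α * β * C + 1) * (m + 2) ≤ ‖x i w - x j w‖) :
    ‖(x i e - x j e) - (x i s - x j s)‖ ≤
      (2 * (α * β * (F + α * M)) * T + 2) * (2 * (α * β * C)) +
        2 * (α * β * (F + α * M)) * T := by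
  have := hc.alpha_nonneg
  have := hc.beta_nonneg
  have := hc.M_nonneg
  have hT0 : 0 ≤ T := by linarith
  set V := α * β * (F + α * M)
  have hceil := Nat.ceil_lt_add_one (by positivity : 0 ≤ 2 * V * T)
  have hVT : 2 * V * (e - s) ≤ 2 * V * T := by gcongr
  calc _ ≤ (⌈2 * V * T⌉₊ + 1) * (2 * (α * β * C)) + 2 * V * (e - s) :=
        norm_displacement_le_of_far_of_le hc hC hC0 hF hcard hi hj _ h hse hT hfar
          (hVT.trans (Nat.le_ceil _))
    _ ≤ _ := add_le_add (mul_le_mul_of_nonneg_right (by linarith) (by positivity)) hVT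

lemma DisplacementBounded.succ (hc : AdmissibleConstants a G α β M) (hF : 0 ≤ F)
    (hC : DisplacementBounded a G x m (F + α * M) T (relBound m (F + α * M) T α β M)) :
    DisplacementBounded a G x (m + 1) F T (relBound (m + 1) F T α β M) := by
  intro P hcard t₀ t₁ hT h s hs i hi j hj
  have hα := hc.alpha_nonneg
  have hβ := hc.beta_nonneg
  have hM := hc.M_nonneg
  have hT0 : 0 ≤ T := by linarith [hs.1, hs.2]
  have hrest := relBound_nonneg m hF hT0 hα hβ hM
  set C := relBound m (F + α * M) T α β M with hC_def
  have hC0 : 0 ≤ C := relBound_nonneg m (by positivity) hT0 hα hβ hM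
  have hunfold : relBound (m + 1) F T α β M = relBound m F T α β M +
      (2 * ((2 * (α * β * (F + α * M)) * T + 2) * (2 * (α * β * C)) +
        2 * (α * β * (F + α * M)) * T) + 2 * (2 * (α * β * C + 1) * (m + 2))) := by
    rw [hC_def]
    simp only [relBound]
    ring
  have key := norm_sub_le_of_forall_Ioo (y := fun w => x i w - x j w)
    (((h.continuousOn hi).sub (h.continuousOn hj)).mono (Icc_subset_Icc_right hs.2)) hs.1
    (by positivity) fun r hr e he hfar => norm_displacement_le_of_far hc hC hC0 hF hcard hi hj
      (h.mono (Icc_subset_Icc hr.1 (he.2.trans hs.2))) he.1 (by linarith [hr.1, he.2, hs.2]) hfar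
  rw [hunfold]
  exact key.trans (le_add_of_nonneg_left hrest)

theorem displacementBounded_relBound (hc : AdmissibleConstants a G α β M) (x : ι → ℝ → Plane)
    (m : ℕ) {F : ℝ} (hF : 0 ≤ F) (T : ℝ) :
    DisplacementBounded a G x m F T (relBound m F T α β M) := by
  induction m generalizing F with
  | zero =>
    intro P hP _ _ _ _ _ _ i hi
    rw [Nat.le_zero, Finset.card_eq_zero] at hP
    exact absurd hi (hP ▸ Finset.notMem_empty i)
  | succ m ih =>
    exact .succ hc hF (ih (add_nonneg hF (mul_nonneg hc.alpha_nonneg hc.M_nonneg)))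

end Induction

lemma IsPerturbedVortexSolution.isPerturbedClusterMotion {N : ℕ} {a : Fin N → ℝ} {G : ℝ → ℝ}
    {T : ℝ} {f : ℝ → Plane → Plane} {x : Fin N → ℝ → Plane}
    (hx : IsPerturbedVortexSolution N a G T f x) {F : ℝ}
    (hf : ∀ t ∈ Ico (0 : ℝ) T, ∀ y : Plane, ‖f t y‖ ≤ F) {t : ℝ} (ht : t ∈ Ico (0 : ℝ) T) :
    IsPerturbedClusterMotion a G Finset.univ F x (Icc 0 t) := by
  have hsub : Icc 0 t ⊆ Ico 0 T := Icc_subset_Ico_right ht.2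
  intro i _ s hs
  refine ⟨_, (hx.2 i s (hsub hs)).mono hsub, ?_⟩
  rw [sum_erase_eq_inducedVelocity a G Finset.univ (fun k => x k s) i, add_sub_cancel_left]
  exact hf s (hsub hs) _

lemma minProperClusterSum_nonneg (N : ℕ) (a : Fin N → ℝ) : 0 ≤ minProperClusterSum N a :=
  Real.sInf_nonneg (by rintro _ ⟨P, -, -, rfl⟩; exact abs_nonneg _)

lemma minProperClusterSum_le {N : ℕ} (a : Fin N → ℝ) {Q : Finset (Fin N)} (hQ : Q.Nonempty)
    (hQ' : Q ≠ Finset.univ) : minProperClusterSum N a ≤ |∑ i ∈ Q, a i| :=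
  csInf_le ⟨0, by rintro _ ⟨P, -, -, rfl⟩; exact abs_nonneg _⟩ ⟨Q, hQ, hQ', rfl⟩

lemma admissibleConstants_of_minProperClusterSum_ne_zero {N : ℕ} {a : Fin N → ℝ}
    (ha : minProperClusterSum N a ≠ 0) {G : ℝ → ℝ} {M : ℝ}
    (hM : ∀ r : ℝ, 1 ≤ r → |deriv G r| ≤ M) :
    AdmissibleConstants a G (∑ k, |a k|) (1 / minProperClusterSum N a) M where
  sum_abs_le := le_rfl
  beta_nonneg := one_div_nonneg.2 (minProperClusterSum_nonneg N a)
  one_le_mul_abs_sum Q hQ hQ' := by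
    rw [one_div_mul_eq_div, one_le_div ((minProperClusterSum_nonneg N a).lt_of_ne' ha)]
    exact minProperClusterSum_le a hQ hQ'
  abs_deriv_le := hM

theorem perturbed_relative_bound_general (N : ℕ) :
    ∃ C : ℕ → ℝ → ℝ → ℝ → ℝ → ℝ → ℝ,
      MonotoneNonnegConstant C ∧ RelativeBoundProperty N C := by
  refine ⟨relBound, monotoneNonnegConstant_relBound, ?_⟩
  intro a _ hA G _ M _ hM T _ f _ F hF hf x hx t ht i j
  exact displacementBounded_relBound (admissibleConstants_of_minProperClusterSum_ne_zero hA hM)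
    x N hF T Finset.univ (by simp) 0 t (by linarith [ht.2]) (hx.isPerturbedClusterMotion hf ht)
    t ⟨ht.1, le_rfl⟩ i (Finset.mem_univ i) j (Finset.mem_univ j)

/-- Relative bound for the perturbed point-vortex system: there is a function
`C : ℕ × (ℝ₊)⁵ → ℝ₊`, nondecreasing in each of its six variables, bounding
`|(x_i(t) − x_j(t)) − (x_i(0) − x_j(0))|` by `C(N, ‖f‖_∞, T, a, 1/A₀, sup_{r≥1}|G'|)`
whenever `A₀ ≠ 0`. -/
theorem perturbed_relative_bound (N : ℕ) (hN : 1 ≤ N) :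
    ∃ C : ℕ → ℝ → ℝ → ℝ → ℝ → ℝ → ℝ,
      MonotoneNonnegConstant C ∧ RelativeBoundProperty N C :=
  perturbed_relative_bound_general N
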